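/- arXiv:1103.3936 — 3 statements merged into one kernel-verified Lean document; each statement's English description precedes it below -/
import Mathlib

section
/- Let A be a ring whose center O is Noetherian, and assume A is finitely generated as a module over O. Let M be a Noetherian (finitely generated) left A-module whose support over O has Krull dimension at most e, let N be a finitely generated left A-module, and let φ : M → N be an injective A-linear map. Then there exists a finitely generated left A-module K whose support over O has Krull dimension at most e, and an A-linear map ψ : N → K such that ψ ∘ φ is injective. -/
/-!
Take `T ≤ N` maximal among submodules meeting `φ(M)` trivially (Zorn) and `K = N ⧸ T`; then
`M ↪ K` and its image is essential in `K`. For `s ∈ Ann_O M`, multiplication by `s` is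
`A`-linear on `K` because `s` is central, and it kills the essential submodule `M`. As `K` is
Noetherian, the kernel and the range of a high power of `s` are disjoint, so that range misses
`M` and hence vanishes: `s ^ n` annihilates `K`. Thus `Ann_O M ⊆ √(Ann_O K)`, i.e.
`Supp K ⊆ Supp M`.
-/

lemma smulCommClass_of_range_algebraMap_le_center {O A M : Type*} [CommRing O] [Ring A]
    [Algebra O A] [AddCommMonoid M] [Module O M] [Module A M] [IsScalarTower O A M]
    (h : (algebraMap O A).range ≤ Subring.center A) : SMulCommClass O A M where
  smul_comm s a m := by
    rw [← algebraMap_smul A s m, ← algebraMap_smul A s (a • m), smul_smul, smul_smul,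
      (Subring.mem_center_iff.mp (h ⟨s, rfl⟩) a)]

namespace Submodule

variable {R N : Type*} [Ring R] [AddCommGroup N] [Module R N]

theorem exists_maximal_disjoint (P : Submodule R N) :
    ∃ T : Submodule R N, Maximal (Disjoint · P) T :=
  zorn_le₀ _ fun _ hc hchain ↦
    ⟨sSup _, hchain.directedOn.disjoint_sSup_left.mpr fun _ hT ↦ hc hT, fun _ ↦ le_sSup⟩

theorem eq_bot_of_disjoint_map_mkQ {P T : Submodule R N} (hT : Maximal (Disjoint · P) T)
    {S : Submodule R (N ⧸ T)} (hS : Disjoint S (P.map T.mkQ)) : S = ⊥ := by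
  have hcomap : Disjoint (S.comap T.mkQ) P := by
    rw [disjoint_iff_inf_le]
    rintro x ⟨hxS, hxP⟩
    have hx : T.mkQ x = 0 := (disjoint_iff_inf_le.mp hS) ⟨hxS, mem_map_of_mem hxP⟩
    exact (disjoint_iff_inf_le.mp hT.prop) ⟨(Quotient.mk_eq_zero T).mp hx, hxP⟩
  have hT_le : T ≤ S.comap T.mkQ := fun x hx ↦ by
    simp [(Quotient.mk_eq_zero T).mpr hx]
  rw [← map_comap_eq_of_surjective T.mkQ_surjective S, ← hT.eq_of_le hcomap hT_le, mkQ_map_self]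

end Submodule

theorem Module.End.exists_pow_eq_zero_of_le_ker {R K : Type*} [Ring R] [AddCommGroup K]
    [Module R K] [IsNoetherian R K] {L : Submodule R K}
    (hL : ∀ S : Submodule R K, Disjoint S L → S = ⊥)
    {f : Module.End R K} (hf : L ≤ LinearMap.ker f) : ∃ n, f ^ n = 0 := by
  obtain ⟨n, hdisj⟩ := (Filter.eventually_atTop.mp f.eventually_disjoint_ker_pow_range_pow).imp
    fun n hn ↦ hn (n + 1) n.le_succ
  refine ⟨n + 1, LinearMap.range_eq_bot.mp (hL _ (hdisj.symm.mono_right ?_))⟩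
  rw [pow_succ, Module.End.mul_eq_comp]
  exact hf.trans (LinearMap.ker_le_ker_comp f _)

theorem annihilator_le_radical_annihilator_of_essential {O A M K : Type*} [CommRing O] [Ring A]
    [Algebra O A] [AddCommGroup M] [Module A M] [Module O M] [IsScalarTower O A M]
    [AddCommGroup K] [Module A K] [Module O K] [IsScalarTower O A K] [SMulCommClass O A K]
    [IsNoetherian A K] (g : M →ₗ[A] K)
    (hg : ∀ S : Submodule A K, Disjoint S (LinearMap.range g) → S = ⊥) :
    Module.annihilator O M ≤ (Module.annihilator O K).radical := by
  intro s hs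
  have hker : LinearMap.range g ≤ LinearMap.ker (algebraMap O (Module.End A K) s) := by
    rintro - ⟨m, rfl⟩
    rw [LinearMap.mem_ker, Module.algebraMap_end_apply, ← g.map_smul_of_tower,
      Module.mem_annihilator.mp hs, map_zero]
  obtain ⟨n, hn⟩ := Module.End.exists_pow_eq_zero_of_le_ker hg hker
  refine ⟨n, Module.mem_annihilator.mpr fun k ↦ ?_⟩
  rw [← Module.algebraMap_end_apply O A, map_pow, hn, LinearMap.zero_apply]

theorem Module.support_subset_of_annihilator_le_radical {R M N : Type*} [CommRing R]
    [AddCommGroup M] [Module R M] [Module.Finite R M] [AddCommGroup N] [Module R N]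
    [Module.Finite R N] (h : Module.annihilator R M ≤ (Module.annihilator R N).radical) :
    Module.support R N ⊆ Module.support R M := by
  rw [Module.support_eq_zeroLocus, Module.support_eq_zeroLocus]
  exact (PrimeSpectrum.zeroLocus_subset_zeroLocus_iff _ _).mpr h

/-- Let `A` be a ring whose center `O` is Noetherian, and assume `A` is
finitely generated as a module over `O`.  Let `M` be a finitely generated left `A`-module whose
support over `O` has Krull dimension at most `e`, let `N` be a finitely generated left
`A`-module, and let `φ : M → N` be an injective `A`-linear map.  Then there exists a finitely
generated left `A`-module `K` whose support over `O` has Krull dimension at most `e`, and an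
`A`-linear map `ψ : N → K` such that `ψ ∘ φ` is injective. -/
theorem stmt0 (O A : Type) [CommRing O] [Ring A] [Algebra O A]
    (hcenter : (algebraMap O A).range = Subring.center A)
    [IsNoetherianRing O] [Module.Finite O A]
    (e : ℕ)
    (M N : Type) [AddCommGroup M] [Module A M] [Module O M] [IsScalarTower O A M]
    [AddCommGroup N] [Module A N] [Module O N] [IsScalarTower O A N]
    [Module.Finite A M] [Module.Finite A N]
    (hM : Order.krullDim (Module.support O M) ≤ (e : WithBot ℕ∞))
    (φ : M →ₗ[A] N) (hφ : Function.Injective φ) :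
    ∃ (K : Type) (_ : AddCommGroup K) (_ : Module A K) (_ : Module O K)
      (_ : IsScalarTower O A K) (_ : Module.Finite A K)
      (ψ : N →ₗ[A] K),
      Order.krullDim (Module.support O K) ≤ (e : WithBot ℕ∞) ∧
        Function.Injective (ψ ∘ₗ φ) := by
  obtain ⟨T, hT⟩ := (LinearMap.range φ).exists_maximal_disjoint
  have : SMulCommClass O A (N ⧸ T) :=
    smulCommClass_of_range_algebraMap_le_center hcenter.le
  have : Module.Finite O M := .trans A M
  have : Module.Finite O (N ⧸ T) := .trans A (N ⧸ T)
  have : IsNoetherian A (N ⧸ T) := isNoetherian_of_tower O inferInstance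
  refine ⟨N ⧸ T, inferInstance, inferInstance, inferInstance, inferInstance, inferInstance,
    T.mkQ, ?_, ?_⟩
  · have hsupp : Module.support O (N ⧸ T) ⊆ Module.support O M :=
      Module.support_subset_of_annihilator_le_radical <|
        annihilator_le_radical_annihilator_of_essential (T.mkQ ∘ₗ φ) fun S hS ↦
          Submodule.eq_bot_of_disjoint_map_mkQ hT (by rwa [LinearMap.range_comp] at hS)
    exact (Order.krullDim_le_of_strictMono (Set.inclusion hsupp) fun _ _ h ↦ h).trans hM
  · rw [← LinearMap.ker_eq_bot, LinearMap.ker_comp, Submodule.ker_mkQ, eq_bot_iff]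
    intro m hm
    have hφm : φ m = 0 := (disjoint_iff_inf_le.mp hT.prop) ⟨hm, m, rfl⟩
    exact (Submodule.mem_bot A).mpr (hφ (hφm.trans φ.map_zero.symm))
end

section
/- Let A be a ring whose center O is Noetherian and over which A is a finitely generated module. Let M be a finitely generated left A-module, E an injective envelope of M in the category of left A-modules, θ : M → E the canonical embedding, and α : N → E any A-linear map extending θ along an injection φ : M → N. Then the image K = Im(α) satisfies: for every prime p of O not in the support of M, the localization K_p vanishes. -/
/-!
Pick `s` in the annihilator of `M` outside `p`. Then `s` kills the essential submodule `θ(M)` of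
`E`, which forces every element of `E` to be killed by a power of `s`. Hence `E_p = 0`, and so
`K_p = 0` for the submodule `K` of `E`.
-/

theorem IsNoetherian.exists_pow_smul_eq_zero_of_pow_succ_smul_eq_zero
    {R T : Type*} [CommRing R] [AddCommGroup T] [Module R T] [IsNoetherian R T] (s : R) :
    ∃ n : ℕ, ∀ y : T, s ^ (n + 1) • y = 0 → s ^ n • y = 0 := by
  obtain ⟨n, hn : ∀ m, n ≤ m → LinearMap.ker (algebraMap R (Module.End R T) s ^ n) =
      LinearMap.ker (algebraMap R (Module.End R T) s ^ m)⟩ :=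
    monotone_stabilizes_iff_noetherian.mpr inferInstance
      (algebraMap R (Module.End R T) s).iterateKer
  refine ⟨n, fun y hy ↦ ?_⟩
  have hker (m : ℕ) (z : T) :
      z ∈ LinearMap.ker (algebraMap R (Module.End R T) s ^ m) ↔ s ^ m • z = 0 := by
    rw [LinearMap.mem_ker, ← map_pow, Module.algebraMap_end_apply]
  rwa [← hker, hn _ n.le_succ, hker]

/-- Take `n` where the `s`-power kernels on the Noetherian `R`-module `A • x` stabilise. If
`sⁿ • x ≠ 0`, essentiality gives a nonzero `a • sⁿ • x ∈ S`; it is killed by `s`, so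
`sⁿ⁺¹ • a • x = 0`, hence `sⁿ • a • x = 0`: a contradiction. -/
theorem exists_pow_smul_eq_zero_of_essential {R A E : Type*} [CommRing R] [IsNoetherianRing R]
    [Ring A] [Algebra R A] [Module.Finite R A]
    [AddCommGroup E] [Module A E] [Module R E] [IsScalarTower R A E]
    {S : Submodule A E} (hS : ∀ S' : Submodule A E, S' ≠ ⊥ → S' ⊓ S ≠ ⊥)
    {s : R} (hs : ∀ y ∈ S, s • y = 0) (x : E) : ∃ n : ℕ, s ^ n • x = 0 := by
  let T := Submodule.span A {x}
  have : Module.Finite R T := Module.Finite.trans A T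
  have : IsNoetherian R T := isNoetherian_of_isNoetherianRing_of_finite R T
  obtain ⟨n, hn⟩ := IsNoetherian.exists_pow_smul_eq_zero_of_pow_succ_smul_eq_zero (T := T) s
  refine ⟨n, by_contra fun hx ↦ ?_⟩
  have hspan : Submodule.span A {s ^ n • x} ≠ ⊥ := by simpa using hx
  obtain ⟨y, hy, hy0⟩ := Submodule.exists_mem_ne_zero_of_ne_bot (hS _ hspan)
  obtain ⟨hyspan, hyS⟩ := Submodule.mem_inf.mp hy
  obtain ⟨a, rfl⟩ := Submodule.mem_span_singleton.mp hyspan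
  have hax := hn ⟨a • x, Submodule.smul_mem _ a (Submodule.mem_span_singleton_self x)⟩ <| by
    ext
    simpa [pow_succ', mul_smul, smul_comm _ a] using hs _ hyS
  apply hy0
  simpa [smul_comm _ a] using congrArg Subtype.val hax

theorem stmt1_general (O A : Type) [CommRing O] [Ring A] [Algebra O A]
    [IsNoetherianRing O] [Module.Finite O A]
    (M N E : Type) [AddCommGroup M] [Module A M] [Module O M] [IsScalarTower O A M]
    [AddCommGroup N] [Module A N]
    [AddCommGroup E] [Module A E] [Module O E] [IsScalarTower O A E]
    [Module.Finite A M]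
    (θ : M →ₗ[A] E)
    (hessential : ∀ S : Submodule A E, S ≠ ⊥ → S ⊓ LinearMap.range θ ≠ ⊥)
    (α : N →ₗ[A] E) :
    ∀ p : PrimeSpectrum O, p ∉ Module.support O M →
      Subsingleton
        (LocalizedModule p.asIdeal.primeCompl
          ↥((LinearMap.range α).restrictScalars O)) := by
  intro p hp
  have : Module.Finite O M := Module.Finite.trans A M
  obtain ⟨s, hsM, hsp⟩ : ∃ s ∈ Module.annihilator O M, s ∉ p.asIdeal := by
    simpa [Module.support_eq_zeroLocus, SetLike.not_le_iff_exists] using hp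
  have hsθ : ∀ y ∈ LinearMap.range θ, s • y = 0 := by
    rintro _ ⟨m, rfl⟩
    rw [← LinearMap.map_smul_of_tower, Module.mem_annihilator.mp hsM, map_zero]
  have hE : p ∉ Module.support O E := Module.notMem_support_iff'.mpr fun x ↦
    let ⟨n, hn⟩ := exists_pow_smul_eq_zero_of_essential hessential hsθ x
    ⟨s ^ n, fun h ↦ hsp (p.isPrime.mem_of_pow_mem n h), hn⟩
  exact Module.notMem_support_iff.mp fun hK ↦ hE <|
    Module.support_subset_of_injective (Submodule.subtype _) Subtype.val_injective hK

/-- Let `A` be a ring whose center `O` is Noetherian and over which `A` is a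
finitely generated module.  Let `M` be a finitely generated left `A`-module, `E` an injective
envelope of `M` (an injective module together with an essential embedding `θ : M → E`), and
`α : N → E` any `A`-linear map extending `θ` along an injection `φ : M → N`.  Then the image
`K = Im(α)` satisfies: for every prime `p` of `O` not in the support of `M`, the localization
`K_p` vanishes. -/
theorem stmt1 (O A : Type) [CommRing O] [Ring A] [Algebra O A]
    (hcenter : (algebraMap O A).range = Subring.center A)
    [IsNoetherianRing O] [Module.Finite O A]
    (M N E : Type) [AddCommGroup M] [Module A M] [Module O M] [IsScalarTower O A M]
    [AddCommGroup N] [Module A N]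
    [AddCommGroup E] [Module A E] [Module O E] [IsScalarTower O A E]
    [Module.Finite A M]
    [Module.Injective A E]
    (θ : M →ₗ[A] E) (hθ : Function.Injective θ)
    (hessential : ∀ S : Submodule A E, S ≠ ⊥ → S ⊓ LinearMap.range θ ≠ ⊥)
    (φ : M →ₗ[A] N) (hφ : Function.Injective φ)
    (α : N →ₗ[A] E) (hα : α ∘ₗ φ = θ) :
    ∀ p : PrimeSpectrum O, p ∉ Module.support O M →
      Subsingleton
        (LocalizedModule p.asIdeal.primeCompl
          ↥((LinearMap.range α).restrictScalars O)) :=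
  stmt1_general O A M N E θ hessential α
end

section
/- Let O = k⟦u,v⟧/(uv). Every maximal Cohen–Macaulay O-module without free direct summands is isomorphic to a finite direct sum of copies of k⟦u⟧ and k⟦v⟧ (viewed as O-modules via the quotient maps O → k⟦u⟧ and O → k⟦v⟧). -/
open PowerSeries

/-- The complete nodal curve singularity `k⟦u,v⟧/(uv)`, realized concretely as the fibre
product `k⟦u⟧ ×_k k⟦v⟧`, i.e. the subring of `k⟦u⟧ × k⟦v⟧` of pairs of power series with
equal constant terms. -/
def NodalRing (k : Type) [Field k] : Subring (PowerSeries k × PowerSeries k) where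
  carrier := {f | PowerSeries.constantCoeff f.1 = PowerSeries.constantCoeff f.2}
  mul_mem' := by
    intro a b ha hb
    simp only [Set.mem_setOf_eq, Prod.fst_mul, Prod.snd_mul, map_mul] at *
    rw [ha, hb]
  add_mem' := by
    intro a b ha hb
    simp only [Set.mem_setOf_eq, Prod.fst_add, Prod.snd_add, map_add] at *
    rw [ha, hb]
  one_mem' := by simp
  zero_mem' := by simp
  neg_mem' := by
    intro a ha
    simp only [Set.mem_setOf_eq, Prod.fst_neg, Prod.snd_neg, map_neg] at *
    rw [ha]

/-- `k⟦u⟧` viewed as a module over the nodal ring via the first projection. -/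
def Ku (k : Type) [Field k] : Type := PowerSeries k

instance (k : Type) [Field k] : AddCommGroup (Ku k) :=
  inferInstanceAs (AddCommGroup (PowerSeries k))

noncomputable instance (k : Type) [Field k] : Module ↥(NodalRing k) (Ku k) :=
  Module.compHom (PowerSeries k)
    ((RingHom.fst (PowerSeries k) (PowerSeries k)).comp (NodalRing k).subtype)

/-- `k⟦v⟧` viewed as a module over the nodal ring via the second projection. -/
def Kv (k : Type) [Field k] : Type := PowerSeries k

instance (k : Type) [Field k] : AddCommGroup (Kv k) :=
  inferInstanceAs (AddCommGroup (PowerSeries k))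

noncomputable instance (k : Type) [Field k] : Module ↥(NodalRing k) (Kv k) :=
  Module.compHom (PowerSeries k)
    ((RingHom.snd (PowerSeries k) (PowerSeries k)).comp (NodalRing k).subtype)

/-!
Write `u = (X, 0)` and `v = (0, X)` in `O = k⟦X⟧ ×_k k⟦X⟧`, and `M[u]`, `M[v]` for the `u`- and
`v`-torsion of `M`. Since `uv = 0` and `u + v` is a non-zerodivisor, `M` embeds into `A × B` with
`A = M ⧸ M[u]` and `B = M ⧸ M[v]`. Now `v` kills `A` and `u` is regular on it, so `A` is a finitely
generated torsion-free, hence free, module over `O ⧸ (v) = k⟦u⟧`; likewise `B` over `k⟦v⟧`. The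
image of `M` in `A × B ≅ k⟦u⟧ᵖ × k⟦v⟧^q` contains `uA × 0` and `0 × vB`, so it is determined by the
subspace `W ⊆ kᵖ × k^q` of its residues, which projects onto both factors. If `W` is everything,
`M ≅ A × B`. Otherwise a relation `α a = β b` on `W` with `α ≠ 0` lifts coefficientwise to maps
`M → k⟦u⟧` and `M → k⟦v⟧` with equal residues, that is, to a map `M → O` hitting a unit, which
is a surjection onto `O`.
-/

namespace Submodule

variable {R M : Type*} [CommRing R] [AddCommGroup M] [Module R M] {a b : R}

theorem torsionBy_inf_torsionBy_eq_bot (h : IsSMulRegular M (a + b)) :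
    torsionBy R M a ⊓ torsionBy R M b = ⊥ := by
  rw [eq_bot_iff]
  rintro x ⟨ha, hb⟩
  rw [SetLike.mem_coe, mem_torsionBy_iff] at ha hb
  exact h.right_eq_zero_of_smul (by rw [add_smul, ha, hb, add_zero])

theorem injective_mkQ_prod_mkQ_torsionBy (h : IsSMulRegular M (a + b)) :
    Function.Injective ((torsionBy R M a).mkQ.prod (torsionBy R M b).mkQ) := by
  rw [← LinearMap.ker_eq_bot, LinearMap.ker_prod, ker_mkQ, ker_mkQ]
  exact torsionBy_inf_torsionBy_eq_bot h

theorem isTorsionBy_quotient_torsionBy (hab : a * b = 0) :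
    Module.IsTorsionBy R (M ⧸ torsionBy R M a) b := by
  rintro ⟨x⟩
  rw [Quotient.quot_mk_eq_mk, ← Quotient.mk_smul, Quotient.mk_eq_zero, mem_torsionBy_iff,
    smul_smul, hab, zero_smul]

theorem isSMulRegular_quotient_torsionBy (hab : a * b = 0) (h : IsSMulRegular M (a + b)) :
    IsSMulRegular (M ⧸ torsionBy R M a) a := by
  refine IsSMulRegular.of_right_eq_zero_of_smul ?_
  rintro ⟨x⟩ hx
  rw [Quotient.quot_mk_eq_mk, ← Quotient.mk_smul, Quotient.mk_eq_zero] at hx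
  have hb : a • x ∈ torsionBy R M b := by
    rw [mem_torsionBy_iff, smul_smul, mul_comm, hab, zero_smul]
  have hax : a • x = 0 := by
    simpa [torsionBy_inf_torsionBy_eq_bot h] using mem_inf.mpr ⟨hx, hb⟩
  rwa [Quotient.quot_mk_eq_mk, Quotient.mk_eq_zero, mem_torsionBy_iff]

theorem exists_forms_eq_of_ne_top {K V₁ V₂ : Type*} [Field K] [AddCommGroup V₁]
    [Module K V₁] [AddCommGroup V₂] [Module K V₂] {W : Submodule K (V₁ × V₂)} (hW : W ≠ ⊤)
    (h₂ : ∀ e : V₂, ∃ w ∈ W, w.2 = e) :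
    ∃ (α : V₁ →ₗ[K] K) (β : V₂ →ₗ[K] K), α ≠ 0 ∧ ∀ w ∈ W, α w.1 = β w.2 := by
  obtain ⟨φ, hφ, hWφ⟩ := W.exists_le_ker_of_lt_top hW.lt_top
  have hφW (w) (hw : w ∈ W) : φ (w.1, 0) + φ (0, w.2) = 0 := by
    rw [← map_add, Prod.mk_add_mk, add_zero, zero_add]
    exact hWφ hw
  refine ⟨φ ∘ₗ LinearMap.inl K V₁ V₂, -(φ ∘ₗ LinearMap.inr K V₁ V₂), fun hα => hφ ?_,
    fun w hw => eq_neg_of_add_eq_zero_left (hφW w hw)⟩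
  have hβ (e : V₂) : φ (0, e) = 0 := by
    obtain ⟨w, hw, rfl⟩ := h₂ e
    simpa [show φ (w.1, 0) = 0 from LinearMap.congr_fun hα w.1] using hφW w hw
  ext e
  · exact LinearMap.congr_fun hα e
  · exact hβ e

end Submodule

theorem PowerSeries.isTorsionFree_of_isSMulRegular_X {k N : Type*} [Field k] [AddCommGroup N]
    [Module k⟦X⟧ N] (h : IsSMulRegular N (X : k⟦X⟧)) : Module.IsTorsionFree k⟦X⟧ N := by
  refine ⟨fun f hf => ?_⟩
  rw [← X_pow_order_mul_divXPowOrder (f := f)]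
  exact (h.pow _).mul ((isUnit_divided_by_X_pow_order hf.ne_zero).isSMulRegular N)

namespace NodalRing

variable (k : Type) [Field k]

theorem mem_iff {f : k⟦X⟧ × k⟦X⟧} : f ∈ NodalRing k ↔ constantCoeff f.1 = constantCoeff f.2 :=
  Iff.rfl

noncomputable def u : NodalRing k := ⟨(X, 0), by simp [mem_iff]⟩

noncomputable def v : NodalRing k := ⟨(0, X), by simp [mem_iff]⟩

noncomputable def inl : k⟦X⟧ →+* NodalRing k :=
  ((RingHom.id _).prod (C.comp constantCoeff)).codRestrict _ fun f => by simp [mem_iff]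

noncomputable def inr : k⟦X⟧ →+* NodalRing k :=
  ((C.comp constantCoeff).prod (RingHom.id _)).codRestrict _ fun f => by simp [mem_iff]

noncomputable def residue : NodalRing k →+* k :=
  constantCoeff.comp ((RingHom.fst _ _).comp (NodalRing k).subtype)

variable {k}

@[simp] theorem coe_u : (u k : k⟦X⟧ × k⟦X⟧) = (X, 0) := rfl

@[simp] theorem coe_v : (v k : k⟦X⟧ × k⟦X⟧) = (0, X) := rfl

@[simp] theorem coe_inl (f : k⟦X⟧) : (inl k f : k⟦X⟧ × k⟦X⟧) = (f, C (constantCoeff f)) := rfl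

@[simp] theorem coe_inr (f : k⟦X⟧) : (inr k f : k⟦X⟧ × k⟦X⟧) = (C (constantCoeff f), f) := rfl

theorem ext_iff {r s : NodalRing k} :
    r = s ↔ (r : k⟦X⟧ × k⟦X⟧).1 = (s : k⟦X⟧ × k⟦X⟧).1 ∧
      (r : k⟦X⟧ × k⟦X⟧).2 = (s : k⟦X⟧ × k⟦X⟧).2 := by
  rw [Subtype.ext_iff, Prod.ext_iff]

theorem u_mul_v : u k * v k = 0 := by
  simp [ext_iff]

theorem v_mul_u : v k * u k = 0 := by
  rw [mul_comm, u_mul_v]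

theorem inl_X : inl k X = u k := by
  simp [ext_iff]

theorem inr_X : inr k X = v k := by
  simp [ext_iff]

theorem u_add_v_mem_nonZeroDivisors : u k + v k ∈ nonZeroDivisors (NodalRing k) := by
  rw [mem_nonZeroDivisors_iff_right]
  intro r hr
  simpa [ext_iff] using hr

theorem v_dvd_sub_inl_fst (r : NodalRing k) : v k ∣ r - inl k (r : k⟦X⟧ × k⟦X⟧).1 := by
  obtain ⟨g, hg⟩ := X_dvd_iff.mpr (show constantCoeff ((r : k⟦X⟧ × k⟦X⟧).2 -
      C (constantCoeff (r : k⟦X⟧ × k⟦X⟧).1)) = 0 by simp [(mem_iff k).mp r.2])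
  refine ⟨inr k g, ?_⟩
  simp [ext_iff, ← hg]

theorem u_dvd_sub_inr_snd (r : NodalRing k) : u k ∣ r - inr k (r : k⟦X⟧ × k⟦X⟧).2 := by
  obtain ⟨g, hg⟩ := X_dvd_iff.mpr (show constantCoeff ((r : k⟦X⟧ × k⟦X⟧).1 -
      C (constantCoeff (r : k⟦X⟧ × k⟦X⟧).2)) = 0 by simp [(mem_iff k).mp r.2])
  refine ⟨inl k g, ?_⟩
  simp [ext_iff, ← hg]

theorem residue_apply (r : NodalRing k) : residue k r = constantCoeff (r : k⟦X⟧ × k⟦X⟧).1 := rfl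

theorem residue_eq_constantCoeff_snd (r : NodalRing k) :
    residue k r = constantCoeff (r : k⟦X⟧ × k⟦X⟧).2 := r.2

@[simp] theorem residue_inl (f : k⟦X⟧) : residue k (inl k f) = constantCoeff f := rfl

theorem isUnit_of_residue_ne_zero {r : NodalRing k} (h : residue k r ≠ 0) : IsUnit r := by
  have h' : constantCoeff (r : k⟦X⟧ × k⟦X⟧).2 ≠ 0 := residue_eq_constantCoeff_snd r ▸ h
  rw [residue_apply] at h
  refine IsUnit.of_mul_eq_one ⟨((r : k⟦X⟧ × k⟦X⟧).1⁻¹, (r : k⟦X⟧ × k⟦X⟧).2⁻¹), ?_⟩ ?_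
  · simp [mem_iff, constantCoeff_inv, (mem_iff k).mp r.2]
  · simp [ext_iff, PowerSeries.mul_inv_cancel _ h, PowerSeries.mul_inv_cancel _ h']

end NodalRing

section

variable {k : Type} [Field k]

/- On `Ku k` (resp. `Kv k`) the action `r • g` unfolds to `r.1 * g` (resp. `r.2 * g`), and the
proofs below use this definitionally. -/

noncomputable def Ku.residue : Ku k →+ k := (constantCoeff : k⟦X⟧ →+* k).toAddMonoidHom

noncomputable def Kv.residue : Kv k →+ k := (constantCoeff : k⟦X⟧ →+* k).toAddMonoidHom

theorem Ku.residue_smul (r : NodalRing k) (g : Ku k) :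
    Ku.residue (r • g) = NodalRing.residue k r * Ku.residue g :=
  map_mul constantCoeff (r : k⟦X⟧ × k⟦X⟧).1 g

theorem Kv.residue_smul (r : NodalRing k) (g : Kv k) :
    Kv.residue (r • g) = NodalRing.residue k r * Kv.residue g := by
  rw [NodalRing.residue_eq_constantCoeff_snd]
  exact map_mul constantCoeff (r : k⟦X⟧ × k⟦X⟧).2 g

theorem Ku.residue_surjective : Function.Surjective (Ku.residue (k := k)) :=
  fun c => ⟨C c, constantCoeff_C c⟩

theorem Kv.residue_surjective : Function.Surjective (Kv.residue (k := k)) :=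
  fun c => ⟨C c, constantCoeff_C c⟩

theorem Ku.isTorsionBy_v : Module.IsTorsionBy (NodalRing k) (Ku k) (NodalRing.v k) :=
  fun g => zero_mul (M₀ := k⟦X⟧) g

theorem Kv.isTorsionBy_u : Module.IsTorsionBy (NodalRing k) (Kv k) (NodalRing.u k) :=
  fun g => zero_mul (M₀ := k⟦X⟧) g

theorem Ku.exists_eq_u_smul {g : Ku k} (hg : Ku.residue g = 0) :
    ∃ g' : Ku k, g = NodalRing.u k • g' :=
  X_dvd_iff.mpr hg

theorem Kv.exists_eq_v_smul {g : Kv k} (hg : Kv.residue g = 0) :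
    ∃ g' : Kv k, g = NodalRing.v k • g' :=
  X_dvd_iff.mpr hg

end

namespace NodalRing

variable {k : Type} [Field k]

section Branch

variable {N : Type*} [AddCommGroup N] [Module (NodalRing k) N]

theorem smul_eq_inl_fst_smul (hv : Module.IsTorsionBy (NodalRing k) N (v k))
    (r : NodalRing k) (n : N) : r • n = inl k (r : k⟦X⟧ × k⟦X⟧).1 • n := by
  obtain ⟨t, ht⟩ := v_dvd_sub_inl_fst r
  rw [← sub_eq_zero, ← sub_smul, ht, mul_comm, mul_smul, hv, smul_zero]

theorem smul_eq_inr_snd_smul (hu : Module.IsTorsionBy (NodalRing k) N (u k))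
    (r : NodalRing k) (n : N) : r • n = inr k (r : k⟦X⟧ × k⟦X⟧).2 • n := by
  obtain ⟨t, ht⟩ := u_dvd_sub_inr_snd r
  rw [← sub_eq_zero, ← sub_smul, ht, mul_comm, mul_smul, hu, smul_zero]

theorem exists_linearEquiv_pi_Ku [Module.Finite (NodalRing k) N]
    (hv : Module.IsTorsionBy (NodalRing k) N (v k)) (hu : IsSMulRegular N (u k)) :
    ∃ p : ℕ, Nonempty (N ≃ₗ[NodalRing k] (Fin p → Ku k)) := by
  let _ : Module k⟦X⟧ N := Module.compHom N (inl k)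
  let _ : Algebra (NodalRing k) k⟦X⟧ :=
    ((RingHom.fst _ _).comp (NodalRing k).subtype).toAlgebra
  have _ : IsScalarTower (NodalRing k) k⟦X⟧ N :=
    .of_algebraMap_smul fun r n => (smul_eq_inl_fst_smul hv r n).symm
  have _ : Module.Finite k⟦X⟧ N := .of_restrictScalars_finite (NodalRing k) _ _
  have _ : Module.IsTorsionFree k⟦X⟧ N :=
    isTorsionFree_of_isSMulRegular_X (by rwa [← inl_X] at hu)
  let e := (Module.finBasis k⟦X⟧ N).equivFun
  exact ⟨_, ⟨{ e with
    map_smul' := fun r n => (congrArg e (smul_eq_inl_fst_smul hv r n)).trans (e.map_smul _ n) }⟩⟩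

theorem exists_linearEquiv_pi_Kv [Module.Finite (NodalRing k) N]
    (hu : Module.IsTorsionBy (NodalRing k) N (u k)) (hv : IsSMulRegular N (v k)) :
    ∃ q : ℕ, Nonempty (N ≃ₗ[NodalRing k] (Fin q → Kv k)) := by
  let _ : Module k⟦X⟧ N := Module.compHom N (inr k)
  let _ : Algebra (NodalRing k) k⟦X⟧ :=
    ((RingHom.snd _ _).comp (NodalRing k).subtype).toAlgebra
  have _ : IsScalarTower (NodalRing k) k⟦X⟧ N :=
    .of_algebraMap_smul fun r n => (smul_eq_inr_snd_smul hu r n).symm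
  have _ : Module.Finite k⟦X⟧ N := .of_restrictScalars_finite (NodalRing k) _ _
  have _ : Module.IsTorsionFree k⟦X⟧ N :=
    isTorsionFree_of_isSMulRegular_X (by rwa [← inr_X] at hv)
  let e := (Module.finBasis k⟦X⟧ N).equivFun
  exact ⟨_, ⟨{ e with
    map_smul' := fun r n => (congrArg e (smul_eq_inr_snd_smul hu r n)).trans (e.map_smul _ n) }⟩⟩

end Branch

section LiftForm

variable {ι : Type*} [Fintype ι] [DecidableEq ι] {P : Type*} [AddCommGroup P]
  [Module (NodalRing k) P]

variable (P) in
noncomputable def liftForm (α : (ι → k) →ₗ[k] k) : (ι → P) →ₗ[NodalRing k] P :=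
  ∑ i, inl k (C (α (Pi.single i 1))) • LinearMap.proj i

theorem map_liftForm {ε : P →+ k} (hε : ∀ r p, ε (r • p) = residue k r * ε p)
    (α : (ι → k) →ₗ[k] k) (g : ι → P) : ε (liftForm P α g) = α fun i => ε (g i) := by
  conv_rhs => rw [← Finset.univ_sum_single fun i => ε (g i)]
  simp only [liftForm, LinearMap.coe_sum, LinearMap.coe_smul, LinearMap.coe_proj,
    Finset.sum_apply, Pi.smul_apply, Function.eval, map_sum, hε, residue_inl, constantCoeff_C]
  refine Finset.sum_congr rfl fun i _ => ?_
  rw [mul_comm, ← smul_eq_mul, ← map_smul, ← Pi.single_smul', smul_eq_mul, mul_one]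

end LiftForm

variable {M : Type*} [AddCommGroup M] [Module (NodalRing k) M]

theorem exists_surjective_of_residue_eq (gA : M →ₗ[NodalRing k] Ku k)
    (gB : M →ₗ[NodalRing k] Kv k) (hg : ∀ x, Ku.residue (gA x) = Kv.residue (gB x)) {x₀ : M}
    (hx₀ : Ku.residue (gA x₀) ≠ 0) :
    ∃ f : M →ₗ[NodalRing k] NodalRing k, Function.Surjective f := by
  let f : M →ₗ[NodalRing k] NodalRing k :=
    { toFun x := ⟨(gA x, gB x), hg x⟩
      map_add' x y := Subtype.ext (Prod.ext (gA.map_add x y) (gB.map_add x y))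
      map_smul' r x := Subtype.ext (Prod.ext (gA.map_smul r x) (gB.map_smul r x)) }
  obtain ⟨w, hw⟩ := isUnit_of_residue_ne_zero (r := f x₀) hx₀
  refine ⟨f, fun r => ⟨(r * ↑w⁻¹) • x₀, ?_⟩⟩
  rw [map_smul, ← hw, smul_eq_mul, mul_assoc, Units.inv_mul, mul_one]

variable {ι κ : Type*}

def residueRange (ψA : M →ₗ[NodalRing k] (ι → Ku k)) (ψB : M →ₗ[NodalRing k] (κ → Kv k)) :
    Submodule k ((ι → k) × (κ → k)) where
  carrier := Set.range fun x => (fun i => Ku.residue (ψA x i), fun j => Kv.residue (ψB x j))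
  add_mem' := by
    rintro _ _ ⟨x, rfl⟩ ⟨y, rfl⟩
    exact ⟨x + y, by ext <;> simp⟩
  zero_mem' := ⟨0, by ext <;> simp⟩
  smul_mem' := by
    rintro c _ ⟨x, rfl⟩
    exact ⟨inl k (C c) • x, by ext <;> simp [Ku.residue_smul, Kv.residue_smul]⟩

variable {ψA : M →ₗ[NodalRing k] (ι → Ku k)} {ψB : M →ₗ[NodalRing k] (κ → Kv k)}

theorem surjective_prod_of_residueRange_eq_top (hA : Function.Surjective ψA)
    (hB : Function.Surjective ψB) (hW : residueRange ψA ψB = ⊤) :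
    Function.Surjective (ψA.prod ψB) := by
  rintro ⟨g, h⟩
  obtain ⟨x₁, hx₁⟩ : (fun i => Ku.residue (g i), fun j => Kv.residue (h j)) ∈
      residueRange ψA ψB :=
    hW ▸ Submodule.mem_top
  simp only [Prod.mk.injEq, funext_iff] at hx₁
  choose g' hg' using fun i => Ku.exists_eq_u_smul (g := g i - ψA x₁ i)
    (by rw [map_sub, hx₁.1 i, sub_self])
  choose h' hh' using fun j => Kv.exists_eq_v_smul (g := h j - ψB x₁ j)
    (by rw [map_sub, hx₁.2 j, sub_self])
  obtain ⟨y, rfl⟩ := hA g'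
  obtain ⟨z, rfl⟩ := hB h'
  refine ⟨x₁ + u k • y + v k • z, Prod.ext (funext fun i => ?_) (funext fun j => ?_)⟩
  · simp [Ku.isTorsionBy_v, ← hg' i]
  · simp [Kv.isTorsionBy_u, ← hh' j]

theorem exists_surjective_of_residueRange_ne_top [Fintype ι] [DecidableEq ι] [Fintype κ]
    [DecidableEq κ] (hA : Function.Surjective ψA) (hB : Function.Surjective ψB)
    (hW : residueRange ψA ψB ≠ ⊤) :
    ∃ f : M →ₗ[NodalRing k] NodalRing k, Function.Surjective f := by
  obtain ⟨α, β, hα, hαβ⟩ := Submodule.exists_forms_eq_of_ne_top hW fun e => by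
    choose g hg using fun j => Kv.residue_surjective (e j)
    obtain ⟨x, hx⟩ := hB g
    exact ⟨_, ⟨x, rfl⟩, funext fun j => by simp [hx, hg]⟩
  obtain ⟨e, he⟩ : ∃ e, α e ≠ 0 := by
    by_contra! h
    exact hα (LinearMap.ext h)
  choose g hg using fun i => Ku.residue_surjective (e i)
  obtain ⟨x₀, hx₀⟩ := hA g
  refine exists_surjective_of_residue_eq (liftForm (Ku k) α ∘ₗ ψA) (liftForm (Kv k) β ∘ₗ ψB)
    (fun x => ?_) (x₀ := x₀) ?_
  · rw [LinearMap.comp_apply, LinearMap.comp_apply, map_liftForm Ku.residue_smul,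
      map_liftForm Kv.residue_smul]
    exact hαβ _ ⟨x, rfl⟩
  · rwa [LinearMap.comp_apply, hx₀, map_liftForm Ku.residue_smul, funext hg]

end NodalRing

open NodalRing Submodule in
/-- Let `O = k⟦u,v⟧/(uv)`.  Every maximal Cohen–Macaulay `O`-module
(i.e. finitely generated torsion-free module) without free direct summands is isomorphic to a
finite direct sum of copies of `k⟦u⟧` and `k⟦v⟧`. -/
theorem stmt19 (k : Type) [Field k]
    (M : Type) [AddCommGroup M] [Module ↥(NodalRing k) M]
    [Module.Finite ↥(NodalRing k) M]
    (htf : ∀ (r : ↥(NodalRing k)) (x : M),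
      r ∈ nonZeroDivisors ↥(NodalRing k) → r • x = 0 → x = 0)
    (hnofree : ¬ ∃ f : M →ₗ[↥(NodalRing k)] ↥(NodalRing k), Function.Surjective f) :
    ∃ p q : ℕ,
      Nonempty (M ≃ₗ[↥(NodalRing k)] ((Fin p → Ku k) × (Fin q → Kv k))) := by
  have hreg : IsSMulRegular M (u k + v k) :=
    .of_right_eq_zero_of_smul fun x => htf _ x u_add_v_mem_nonZeroDivisors
  obtain ⟨p, ⟨eA⟩⟩ := exists_linearEquiv_pi_Ku (N := M ⧸ torsionBy _ M (u k))
    (isTorsionBy_quotient_torsionBy u_mul_v) (isSMulRegular_quotient_torsionBy u_mul_v hreg)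
  obtain ⟨q, ⟨eB⟩⟩ := exists_linearEquiv_pi_Kv (N := M ⧸ torsionBy _ M (v k))
    (isTorsionBy_quotient_torsionBy v_mul_u)
    (isSMulRegular_quotient_torsionBy v_mul_u (add_comm (u k) (v k) ▸ hreg))
  let ψA := eA.toLinearMap ∘ₗ (torsionBy _ M (u k)).mkQ
  let ψB := eB.toLinearMap ∘ₗ (torsionBy _ M (v k)).mkQ
  have hA : Function.Surjective ψA := eA.surjective.comp (mkQ_surjective _)
  have hB : Function.Surjective ψB := eB.surjective.comp (mkQ_surjective _)
  have hinj : Function.Injective (ψA.prod ψB) := fun x y h =>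
    injective_mkQ_prod_mkQ_torsionBy hreg ((eA.prodCongr eB).injective h)
  have hW : residueRange ψA ψB = ⊤ := by_contra fun hW =>
    hnofree (exists_surjective_of_residueRange_ne_top hA hB hW)
  exact ⟨p, q, ⟨.ofBijective (ψA.prod ψB)
    ⟨hinj, surjective_prod_of_residueRange_eq_top hA hB hW⟩⟩⟩
end
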